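/- arXiv:1908.01532 — 3 statements merged into one kernel-verified Lean document; each statement's English description precedes it below -/
import Mathlib

section
/- Let α ∈ ℝ and let q : ℝ → ℝ be a twice differentiable function satisfying the Painlevé II equation q''(x) = 2q(x)³ + x·q(x) - (2α + 1/2) for all x ∈ ℝ. Define w(s) = -2^{1/3}·q(-2^{1/3}s) and u(s) = 2^{-1/3}·( q'(-2^{1/3}s) + q(-2^{1/3}s)² + (-2^{1/3}s)/2 ). Then u and w are differentiable and satisfy the Hamiltonian system u'(s) = 2u(s)w(s) + 2α and w'(s) = -(w(s)² - 2u(s) - s) for all s ∈ ℝ. -/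
/-- The rescaling w(s) = -2^{1/3}q(-2^{1/3}s), u(s) = 2^{-1/3}(q' + q² + s/2)(-2^{1/3}s)
of a Painlevé II transcendent q solves the rescaled Hamiltonian system. -/
theorem stmt_5 (α : ℝ) (q q' : ℝ → ℝ)
    (hq : ∀ x : ℝ, HasDerivAt q (q' x) x)
    (hq' : ∀ x : ℝ, HasDerivAt q' (2 * q x ^ 3 + x * q x - (2 * α + 1 / 2)) x)
    (w u : ℝ → ℝ)
    (hw : ∀ s : ℝ, w s = -(2 : ℝ) ^ ((1 : ℝ) / 3) * q (-(2 : ℝ) ^ ((1 : ℝ) / 3) * s))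
    (hu : ∀ s : ℝ, u s = (2 : ℝ) ^ (-(1 : ℝ) / 3) *
      (q' (-(2 : ℝ) ^ ((1 : ℝ) / 3) * s) + q (-(2 : ℝ) ^ ((1 : ℝ) / 3) * s) ^ 2 +
        (-(2 : ℝ) ^ ((1 : ℝ) / 3) * s) / 2)) :
    ∀ s : ℝ, HasDerivAt u (2 * u s * w s + 2 * α) s ∧
      HasDerivAt w (-(w s ^ 2 - 2 * u s - s)) s := by
  intro s
  set c : ℝ := (2 : ℝ) ^ ((1 : ℝ) / 3) with hc
  have hc3 : c ^ 3 = 2 := by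
    rw [hc, ← Real.rpow_natCast ((2:ℝ) ^ ((1:ℝ)/3)) 3, ← Real.rpow_mul (by norm_num)]
    norm_num
  have hcpos : (0 : ℝ) < c := Real.rpow_pos_of_pos (by norm_num) _
  have hcne : c ≠ 0 := ne_of_gt hcpos
  have hinv : (2 : ℝ) ^ (-(1 : ℝ) / 3) = c⁻¹ := by
    rw [neg_div, Real.rpow_neg (by norm_num)]
  have hlin : HasDerivAt (fun t : ℝ => -c * t) (-c) s := by
    simpa using (hasDerivAt_id s).const_mul (-c)
  have hqc : HasDerivAt (fun t : ℝ => q (-c * t)) (q' (-c * s) * (-c)) s :=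
    (hq _).comp s hlin
  have hq'c : HasDerivAt (fun t : ℝ => q' (-c * t))
      ((2 * q (-c * s) ^ 3 + (-c * s) * q (-c * s) - (2 * α + 1 / 2)) * (-c)) s :=
    (hq' _).comp s hlin
  have hwfun : w = fun t => -c * q (-c * t) := funext hw
  have hufun : u = fun t => c⁻¹ * (q' (-c * t) + q (-c * t) ^ 2 + (-c * t) / 2) := by
    funext t; rw [hu t, hinv]
  have hsq : HasDerivAt (fun t : ℝ => q (-c * t) ^ 2)
      ((2 : ℕ) * q (-c * s) ^ 1 * (q' (-c * s) * (-c))) s := hqc.pow 2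
  have hU : HasDerivAt u
      (c⁻¹ * ((2 * q (-c * s) ^ 3 + (-c * s) * q (-c * s) - (2 * α + 1 / 2)) * (-c)
        + (2 : ℕ) * q (-c * s) ^ 1 * (q' (-c * s) * (-c)) + (-c) / 2)) s := by
    rw [hufun]
    exact ((hq'c.add hsq).add (hlin.div_const 2)).const_mul c⁻¹
  have hW : HasDerivAt w (-c * (q' (-c * s) * (-c))) s := by
    rw [hwfun]
    exact hqc.const_mul (-c)
  have hci : c⁻¹ = c ^ 2 / 2 := by
    field_simp
    linear_combination -hc3
  constructor
  · convert hU using 1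
    rw [hu s, hw s, hinv, hci]
    push_cast
    linear_combination (-α) * hc3
  · convert hW using 1
    rw [hu s, hw s, hinv, hci]
    linear_combination (-(s/2)) * hc3
end

section
/- Let α ∈ ℝ and let u, w : ℝ → ℝ be differentiable functions satisfying u'(s) = 2u(s)w(s) + 2α and w'(s) = -(w(s)² - 2u(s) - s) for all s ∈ ℝ, and let H(s) = -u(s)² + (w(s)² - s)·u(s) + 2α·w(s). Then H is twice differentiable and satisfies the Jimbo–Miwa–Okamoto σ-form of the Painlevé II equation with γ = 2α: (H''(s))² + 4H'(s)·( (H'(s))² - s·H'(s) + H(s) ) - (2α)² = 0 for all s ∈ ℝ. -/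
/-!
Along the Hamiltonian flow `dH/ds = ∂H/∂s = -u`. Hence `H'' = -u' = -(2uw + 2α)`, and
substituting `H`, `H'`, `H''` into the σ-form leaves a polynomial identity in `u`, `w`, `s`, `α`.
-/

def painleveIIHamiltonian (α : ℝ) (u w : ℝ → ℝ) (s : ℝ) : ℝ :=
  -(u s) ^ 2 + (w s ^ 2 - s) * u s + 2 * α * w s

theorem hasDerivAt_painleveIIHamiltonian {α s : ℝ} {u w : ℝ → ℝ}
    (hu : HasDerivAt u (2 * u s * w s + 2 * α) s)
    (hw : HasDerivAt w (-(w s ^ 2 - 2 * u s - s)) s) :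
    HasDerivAt (painleveIIHamiltonian α u w) (-(u s)) s := by
  have h := ((hu.pow 2).neg.add (((hw.pow 2).sub (hasDerivAt_id s)).mul hu)).add
    ((hasDerivAt_const s (2 * α)).mul hw)
  refine h.congr_deriv ?_
  simp only [Pi.sub_apply, Pi.pow_apply, id_eq, Nat.cast_ofNat]
  ring

theorem painleveII_sigmaForm_identity (α s u w : ℝ) :
    (-(2 * u * w + 2 * α)) ^ 2 +
      4 * (-u) * ((-u) ^ 2 - s * (-u) + (-u ^ 2 + (w ^ 2 - s) * u + 2 * α * w))
      - (2 * α) ^ 2 = 0 := by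
  ring

/-- The Hamiltonian H of the rescaled Painlevé II Hamiltonian system satisfies the
Jimbo–Miwa–Okamoto σ-form with γ = 2α. -/
theorem stmt_8 (α : ℝ) (u w : ℝ → ℝ)
    (hu : ∀ s : ℝ, HasDerivAt u (2 * u s * w s + 2 * α) s)
    (hw : ∀ s : ℝ, HasDerivAt w (-(w s ^ 2 - 2 * u s - s)) s)
    (H : ℝ → ℝ)
    (hH : ∀ s : ℝ, H s = -(u s) ^ 2 + (w s ^ 2 - s) * u s + 2 * α * w s) :
    (∀ s : ℝ, DifferentiableAt ℝ H s) ∧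
    (∀ s : ℝ, DifferentiableAt ℝ (deriv H) s) ∧
    ∀ s : ℝ, (deriv (deriv H) s) ^ 2 +
      4 * deriv H s * ((deriv H s) ^ 2 - s * deriv H s + H s) - (2 * α) ^ 2 = 0 := by
  have hH' (s : ℝ) : HasDerivAt H (-(u s)) s :=
    (funext hH : H = painleveIIHamiltonian α u w) ▸
      hasDerivAt_painleveIIHamiltonian (hu s) (hw s)
  have hderiv : deriv H = fun s => -(u s) := funext fun s => (hH' s).deriv
  have hH'' (s : ℝ) : HasDerivAt (deriv H) (-(2 * u s * w s + 2 * α)) s :=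
    hderiv ▸ (hu s).neg
  refine ⟨fun s => (hH' s).differentiableAt, fun s => (hH'' s).differentiableAt, fun s => ?_⟩
  rw [(hH'' s).deriv, (hH' s).deriv, hH s]
  exact painleveII_sigmaForm_identity α s (u s) (w s)
end

section
/- Let A : ℝ → ℝ be a twice differentiable function satisfying the Airy equation A''(x) = x·A(x) for all x, and let I ⊆ ℝ be an open interval such that A(-2^{-1/3}s) ≠ 0 for all s ∈ I. Define q(s) = -2^{-1/3}·A'(-2^{-1/3}s)/A(-2^{-1/3}s) for s ∈ I. Then q is twice differentiable on I and satisfies the Painlevé II equation with ν = 1/2: q''(s) = 2q(s)³ + s·q(s) - 1/2 for all s ∈ I. -/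
/-!
The logarithmic derivative `w = A'/A` of a solution of the Airy equation solves the Riccati
equation `w' = x - w²`. Rescaling by `c = 2^{-1/3}`, so that `c³ = 1/2`, turns
`q(s) = -c w(-c s)` into a solution of `q' = -q² - s/2`, and differentiating this once more
gives `q'' = -2 q q' - 1/2 = 2q³ + s q - 1/2`.
-/

theorem hasDerivAt_riccati_of_linear_second_order {A A' : ℝ → ℝ} {V x : ℝ}
    (hA : HasDerivAt A (A' x) x) (hA' : HasDerivAt A' (V * A x) x) (hx : A x ≠ 0) :
    HasDerivAt (fun y => A' y / A y) (V - (A' x / A x) ^ 2) x :=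
  (hA'.div hA hx).congr_deriv (by field_simp)

theorem hasDerivAt_rescaled_airy_logDeriv {A A' : ℝ → ℝ}
    (hA : ∀ x, HasDerivAt A (A' x) x) (hA' : ∀ x, HasDerivAt A' (x * A x) x)
    {c s : ℝ} (hs : A (-c * s) ≠ 0) :
    HasDerivAt (fun t => -c * A' (-c * t) / A (-c * t))
      (-c ^ 3 * s - (-c * A' (-c * s) / A (-c * s)) ^ 2) s := by
  have hlin : HasDerivAt (fun t : ℝ => -c * t) (-c) s := by
    simpa using (hasDerivAt_id s).const_mul (-c)
  have hw :=
    ((hasDerivAt_riccati_of_linear_second_order (hA _) (hA' _) hs).comp s hlin).const_mul (-c)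
  simp only [Function.comp_def, ← mul_div_assoc] at hw
  exact hw.congr_deriv (by ring)

theorem hasDerivAt_deriv_of_riccati {q : ℝ → ℝ} {U : Set ℝ} (hU : IsOpen U)
    (hq : ∀ s ∈ U, HasDerivAt q (-q s ^ 2 - s / 2) s) {s : ℝ} (hs : s ∈ U) :
    HasDerivAt (deriv q) (2 * q s ^ 3 + s * q s - 1 / 2) s := by
  have hderiv : (fun t => -q t ^ 2 - t / 2) =ᶠ[nhds s] deriv q := by
    filter_upwards [hU.mem_nhds hs] with t ht
    exact (hq t ht).deriv.symm
  have hrhs : HasDerivAt (fun t => -q t ^ 2 - t / 2)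
      (-(2 * q s ^ 1 * (-q s ^ 2 - s / 2)) - 1 / 2) s :=
    ((hq s hs).pow 2).neg.sub ((hasDerivAt_id s).div_const 2)
  exact (hrhs.congr_of_eventuallyEq hderiv.symm).congr_deriv (by ring)

theorem two_rpow_neg_one_third_pow_three : ((2 : ℝ) ^ (-(1 : ℝ) / 3)) ^ 3 = 1 / 2 := by
  rw [← Real.rpow_natCast, ← Real.rpow_mul (by norm_num)]
  norm_num

theorem stmt_10_general (A A' : ℝ → ℝ)
    (hA : ∀ x : ℝ, HasDerivAt A (A' x) x)
    (hA' : ∀ x : ℝ, HasDerivAt A' (x * A x) x)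
    (I : Set ℝ) (hIopen : IsOpen I)
    (hA0 : ∀ s ∈ I, A (-(2 : ℝ) ^ (-(1 : ℝ) / 3) * s) ≠ 0)
    (q : ℝ → ℝ)
    (hq : ∀ s : ℝ, q s = -(2 : ℝ) ^ (-(1 : ℝ) / 3) *
      A' (-(2 : ℝ) ^ (-(1 : ℝ) / 3) * s) / A (-(2 : ℝ) ^ (-(1 : ℝ) / 3) * s)) :
    (∀ s ∈ I, DifferentiableAt ℝ q s) ∧
    ∀ s ∈ I, HasDerivAt (deriv q) (2 * q s ^ 3 + s * q s - 1 / 2) s := by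
  have hriccati : ∀ s ∈ I, HasDerivAt q (-q s ^ 2 - s / 2) s := by
    intro s hs
    have h := hasDerivAt_rescaled_airy_logDeriv hA hA' (hA0 s hs)
    rw [two_rpow_neg_one_third_pow_three, ← hq s] at h
    convert h using 1
    · exact funext hq
    · ring
  exact ⟨fun s hs => (hriccati s hs).differentiableAt,
    fun s hs => hasDerivAt_deriv_of_riccati hIopen hriccati hs⟩

/-- q(s) = -2^{-1/3}·A'(-2^{-1/3}s)/A(-2^{-1/3}s) built from an Airy function satisfies the
Painlevé II equation with ν = 1/2 on an interval where the denominator does not vanish. -/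
theorem stmt_10 (A A' : ℝ → ℝ)
    (hA : ∀ x : ℝ, HasDerivAt A (A' x) x)
    (hA' : ∀ x : ℝ, HasDerivAt A' (x * A x) x)
    (I : Set ℝ) (hIopen : IsOpen I) (hIconn : I.OrdConnected)
    (hA0 : ∀ s ∈ I, A (-(2 : ℝ) ^ (-(1 : ℝ) / 3) * s) ≠ 0)
    (q : ℝ → ℝ)
    (hq : ∀ s : ℝ, q s = -(2 : ℝ) ^ (-(1 : ℝ) / 3) *
      A' (-(2 : ℝ) ^ (-(1 : ℝ) / 3) * s) / A (-(2 : ℝ) ^ (-(1 : ℝ) / 3) * s)) :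
    (∀ s ∈ I, DifferentiableAt ℝ q s) ∧
    ∀ s ∈ I, HasDerivAt (deriv q) (2 * q s ^ 3 + s * q s - 1 / 2) s :=
  stmt_10_general A A' hA hA' I hIopen hA0 q hq
end
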